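/- arXiv:1708.08131 — 3 statements merged into one kernel-verified Lean document; each statement's English description precedes it below -/
import Mathlib

section
/- Let T > 0, d ≥ 1, α = (α₁,…,α_d) ∈ (0,1]^d, and let f : [0,T] × ℂ^d → ℂ^d be continuous with each component satisfying a Lipschitz condition in the second variable with constant L. Then for every x₀ ∈ ℂ^d, the Volterra integral equation x_i(t) = x_i⁰ + (1/Γ(α_i)) ∫₀ᵗ (t−s)^{α_i−1} f_i(s, x(s)) ds, i = 1,…,d, has a unique continuous solution x : [0,T] → ℂ^d. -/
/-!
Picard iteration in `C([0,T], ℂ^d)`. Measured in the Bielecki weight `exp (l t)`, the integral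
operator contracts by the factor `max_i L l^{-α_i}`, because
`∫₀ᵗ (t-s)^{a-1} e^{ls} ds ≤ Γ(a) l^{-a} e^{lt}`; for large `l` this factor is `≤ 1/2`. Since the
weight is bounded above and below on `[0,T]`, some iterate of the operator is a contraction for the
sup metric, and Banach's fixed point theorem gives the unique continuous solution. Continuity of
the fractional integral `t ↦ ∫₀ᵗ (t-s)^{a-1} g(s) ds` comes from dominated convergence after the
substitution `r = t - s`.
-/

open MeasureTheory Set Filter Topology intervalIntegral

section RiemannLiouville

variable {E : Type*} [NormedAddCommGroup E] [NormedSpace ℝ E]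

noncomputable def riemannLiouville (a : ℝ) (g : ℝ → E) (t : ℝ) : E :=
  (Real.Gamma a)⁻¹ • ∫ s in (0 : ℝ)..t, (t - s) ^ (a - 1) • g s

lemma intervalIntegrable_rpow_sub_smul {a t : ℝ} (ha : 0 < a) {g : ℝ → E}
    (hg : ContinuousOn g (uIcc 0 t)) :
    IntervalIntegrable (fun s => (t - s) ^ (a - 1) • g s) volume 0 t := by
  have hker :=
    (intervalIntegrable_rpow' (a := t) (b := 0) (r := a - 1) (by linarith)).comp_sub_left t
  rw [sub_self, sub_zero] at hker
  exact hker.smul_continuousOn hg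

lemma riemannLiouville_congr {a t : ℝ} {g g' : ℝ → E} (h : EqOn g g' (uIcc 0 t)) :
    riemannLiouville a g t = riemannLiouville a g' t := by
  unfold riemannLiouville
  congr 1
  exact integral_congr fun s hs => by simp only [h hs]

lemma riemannLiouville_sub {a t : ℝ} (ha : 0 < a) {g g' : ℝ → E}
    (hg : ContinuousOn g (uIcc 0 t)) (hg' : ContinuousOn g' (uIcc 0 t)) :
    riemannLiouville a (g - g') t = riemannLiouville a g t - riemannLiouville a g' t := by
  unfold riemannLiouville
  simp_rw [Pi.sub_apply, smul_sub]
  rw [integral_sub (intervalIntegrable_rpow_sub_smul ha hg)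
    (intervalIntegrable_rpow_sub_smul ha hg'), smul_sub]

lemma integral_rpow_sub_mul_exp_le {a l t : ℝ} (ha : 0 < a) (hl : 0 < l) (ht : 0 ≤ t) :
    ∫ s in (0 : ℝ)..t, (t - s) ^ (a - 1) * Real.exp (l * s)
      ≤ Real.exp (l * t) * (l ^ (-a) * Real.Gamma a) := by
  have hsub : ∫ s in (0 : ℝ)..t, (t - s) ^ (a - 1) * Real.exp (l * s)
      = Real.exp (l * t) * ∫ r in (0 : ℝ)..t, r ^ (a - 1) * Real.exp (-(l * r)) := by
    rw [← intervalIntegral.integral_const_mul]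
    simpa [mul_sub, Real.exp_sub, Real.exp_neg, div_eq_mul_inv, mul_left_comm] using
      integral_comp_sub_left (a := 0) (b := t) (fun r => r ^ (a - 1) * Real.exp (l * (t - r))) t
  have hGamma := Real.integral_rpow_mul_exp_neg_mul_Ioi ha hl
  have hint : IntegrableOn (fun r => r ^ (a - 1) * Real.exp (-(l * r))) (Ioi 0) :=
    Integrable.of_integral_ne_zero (by rw [hGamma]; positivity)
  have htail : ∫ r in (0 : ℝ)..t, r ^ (a - 1) * Real.exp (-(l * r)) ≤ l ^ (-a) * Real.Gamma a := by
    rw [integral_of_le ht, Real.rpow_neg hl.le, ← Real.inv_rpow hl.le, ← one_div, ← hGamma]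
    refine setIntegral_mono_set hint ?_ Ioc_subset_Ioi_self.eventuallyLE
    filter_upwards [ae_restrict_mem measurableSet_Ioi] with r hr
    exact mul_nonneg (Real.rpow_nonneg (le_of_lt hr) _) (Real.exp_pos _).le
  rw [hsub]
  gcongr

lemma norm_riemannLiouville_le_of_le_exp {a l t C : ℝ} (ha : 0 < a) (hl : 0 < l) (ht : 0 ≤ t)
    {g : ℝ → E} (hC : ∀ s ∈ Icc 0 t, ‖g s‖ ≤ C * Real.exp (l * s)) :
    ‖riemannLiouville a g t‖ ≤ C * l ^ (-a) * Real.exp (l * t) := by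
  have hC0 : 0 ≤ C := by
    simpa using (norm_nonneg _).trans (hC 0 ⟨le_rfl, ht⟩)
  have hΓ := Real.Gamma_pos_of_pos ha
  have hint : ‖∫ s in (0 : ℝ)..t, (t - s) ^ (a - 1) • g s‖
      ≤ ∫ s in (0 : ℝ)..t, (t - s) ^ (a - 1) * (C * Real.exp (l * s)) := by
    refine norm_integral_le_of_norm_le ht (ae_of_all _ fun s hs => ?_) ?_
    · have hts : 0 ≤ t - s := by linarith [hs.2]
      rw [norm_smul, Real.norm_of_nonneg (Real.rpow_nonneg hts _)]
      exact mul_le_mul_of_nonneg_left (hC s (Ioc_subset_Icc_self hs)) (Real.rpow_nonneg hts _)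
    · simpa only [smul_eq_mul] using
        intervalIntegrable_rpow_sub_smul (g := fun s => C * Real.exp (l * s)) ha (by fun_prop)
  have hker : ∫ s in (0 : ℝ)..t, (t - s) ^ (a - 1) * (C * Real.exp (l * s))
      ≤ C * (Real.exp (l * t) * (l ^ (-a) * Real.Gamma a)) := by
    simp_rw [mul_left_comm _ C]
    rw [intervalIntegral.integral_const_mul]
    exact mul_le_mul_of_nonneg_left (integral_rpow_sub_mul_exp_le ha hl ht) hC0
  calc ‖riemannLiouville a g t‖
      = (Real.Gamma a)⁻¹ * ‖∫ s in (0 : ℝ)..t, (t - s) ^ (a - 1) • g s‖ := by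
        rw [riemannLiouville, norm_smul, Real.norm_of_nonneg (inv_nonneg.2 hΓ.le)]
    _ ≤ (Real.Gamma a)⁻¹ * (C * (Real.exp (l * t) * (l ^ (-a) * Real.Gamma a))) := by
        gcongr; exact hint.trans hker
    _ = C * l ^ (-a) * Real.exp (l * t) := by field_simp

lemma integral_rpow_sub_smul_eq_setIntegral_indicator {a T t : ℝ} (ht : t ∈ Icc 0 T) (g : ℝ → E) :
    ∫ s in (0 : ℝ)..t, (t - s) ^ (a - 1) • g s
      = ∫ r in Ioc 0 T, (Iic t).indicator (fun r => r ^ (a - 1) • g (t - r)) r := by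
  rw [setIntegral_indicator measurableSet_Iic, Ioc_inter_Iic, min_eq_right ht.2,
    ← integral_of_le ht.1]
  simpa using integral_comp_sub_left (a := 0) (b := t) (fun r => r ^ (a - 1) • g (t - r)) t

lemma continuousOn_riemannLiouville_of_continuous {a T : ℝ} (ha : 0 < a) {g : ℝ → E}
    (hg : Continuous g) : ContinuousOn (riemannLiouville a g) (Icc 0 T) := by
  -- after the substitution `r = t - s` the integrand is dominated by `r ^ (a - 1) * sup ‖g‖`
  -- uniformly in `t`, and it is continuous in `t` except where `r = t`
  set F : ℝ → ℝ → E := fun t => (Iic t).indicator (fun r => r ^ (a - 1) • g (t - r))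
  suffices ContinuousOn (fun t => ∫ r in Ioc 0 T, F t r) (Icc 0 T) from
    ((continuousOn_const (c := (Real.Gamma a)⁻¹)).smul this).congr fun t ht => by
      rw [riemannLiouville, integral_rpow_sub_smul_eq_setIntegral_indicator ht]
      rfl
  intro t₀ ht₀
  obtain ⟨M, hM⟩ := isCompact_Icc.exists_bound_of_continuousOn (hg.continuousOn (s := Icc 0 T))
  have hM0 : 0 ≤ M := (norm_nonneg _).trans (hM 0 ⟨le_rfl, ht₀.1.trans ht₀.2⟩)
  refine continuousWithinAt_of_dominated (bound := fun r => r ^ (a - 1) * M) ?_ ?_ ?_ ?_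
  · refine Eventually.of_forall fun t => ?_
    exact (((measurable_id.pow_const _).stronglyMeasurable.smul
      (hg.comp (continuous_const.sub continuous_id)).stronglyMeasurable).indicator
      measurableSet_Iic).aestronglyMeasurable
  · filter_upwards [self_mem_nhdsWithin] with t ht
    refine ae_restrict_of_forall_mem measurableSet_Ioc fun r hr => ?_
    have hr0 : 0 ≤ r ^ (a - 1) := Real.rpow_nonneg hr.1.le _
    by_cases hrt : r ≤ t
    · rw [show F t r = _ from indicator_of_mem (mem_Iic.2 hrt) _, norm_smul,
        Real.norm_of_nonneg hr0]
      exact mul_le_mul_of_nonneg_left (hM _ ⟨by linarith, by linarith [hr.1, ht.2]⟩) hr0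
    · rw [show F t r = 0 from indicator_of_notMem (mt mem_Iic.1 hrt) _, norm_zero]
      exact mul_nonneg hr0 hM0
  · exact ((intervalIntegrable_rpow' (a := 0) (b := T) (by linarith)).1).mul_const M
  · filter_upwards [ae_restrict_of_ae (Measure.ae_ne volume t₀)] with r hr
    refine ContinuousAt.continuousWithinAt ?_
    rcases hr.lt_or_gt with hr | hr
    · have hc : Continuous fun t => r ^ (a - 1) • g (t - r) := by fun_prop
      refine hc.continuousAt.congr ?_
      filter_upwards [eventually_gt_nhds hr] with t ht
      simp [F, ht.le]
    · refine (continuousAt_const (y := (0 : E))).congr ?_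
      filter_upwards [eventually_lt_nhds hr] with t ht
      simp [F, not_le.2 ht]

lemma continuousOn_riemannLiouville {a T : ℝ} (ha : 0 < a) {g : ℝ → E}
    (hg : ContinuousOn g (Icc 0 T)) : ContinuousOn (riemannLiouville a g) (Icc 0 T) := by
  rcases lt_or_ge T 0 with hT | hT
  · simp [Icc_eq_empty_of_lt hT]
  have hg' : Continuous (IccExtend hT ((Icc 0 T).domRestrict g)) :=
    hg.domRestrict.Icc_extend'
  refine (continuousOn_riemannLiouville_of_continuous ha hg').congr fun t ht =>
    riemannLiouville_congr fun s hs => ?_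
  have hs' : s ∈ Icc 0 T := by
    rw [uIcc_of_le ht.1] at hs
    exact ⟨hs.1, hs.2.trans ht.2⟩
  simp [IccExtend_of_mem _ _ hs']

end RiemannLiouville

theorem ContinuousMap.existsUnique_fixedPoint_of_weighted_contraction
    {X F : Type*} [TopologicalSpace X] [CompactSpace X] [NormedAddCommGroup F] [CompleteSpace F]
    (P : C(X, F) → C(X, F)) (ω : X → ℝ) {W q : ℝ} (hω : ∀ x, 1 ≤ ω x) (hωW : ∀ x, ω x ≤ W)
    (hq₀ : 0 ≤ q) (hq : q < 1)
    (hP : ∀ u v C, 0 ≤ C → (∀ x, ‖u x - v x‖ ≤ C * ω x) → ∀ x, ‖P u x - P v x‖ ≤ q * C * ω x) :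
    ∃! u, P u = u := by
  have hiter : ∀ n u v x, ‖(P^[n] u) x - (P^[n] v) x‖ ≤ q ^ n * dist u v * ω x := by
    intro n
    induction n with
    | zero =>
      intro u v x
      rw [Function.iterate_zero_apply, Function.iterate_zero_apply, pow_zero, one_mul,
        ← dist_eq_norm]
      exact (ContinuousMap.dist_apply_le_dist x).trans
        (le_mul_of_one_le_right dist_nonneg (hω x))
    | succ n ih =>
      intro u v x
      rw [Function.iterate_succ_apply', Function.iterate_succ_apply', pow_succ', mul_assoc q]
      exact hP _ _ _ (by positivity) (ih u v) x
  have hW : 0 < max W 1 := lt_max_of_lt_right one_pos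
  obtain ⟨n, hn⟩ := exists_pow_lt_of_lt_one (inv_pos.2 hW) hq
  have hK₀ : 0 ≤ q ^ n * max W 1 := by positivity
  have hK : q ^ n * max W 1 < 1 :=
    (mul_lt_mul_of_pos_right hn hW).trans_eq (inv_mul_cancel₀ hW.ne')
  have hcontr : ContractingWith (q ^ n * max W 1).toNNReal P^[n] := by
    refine ⟨Real.toNNReal_lt_one.2 hK, LipschitzWith.of_dist_le_mul fun u v => ?_⟩
    refine (ContinuousMap.dist_le (by positivity)).2 fun x => ?_
    rw [dist_eq_norm, Real.coe_toNNReal _ hK₀, mul_right_comm]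
    exact (hiter n u v x).trans
      (mul_le_mul_of_nonneg_left ((hωW x).trans (le_max_left _ _)) (by positivity))
  refine ⟨_, hcontr.isFixedPt_fixedPoint_iterate, fun u hu => ?_⟩
  exact hcontr.fixedPoint_unique (Function.IsFixedPt.iterate hu n)

lemma exists_pos_forall_mul_rpow_neg_le {ι : Type*} [Finite ι] {α : ι → ℝ} (hα : ∀ i, 0 < α i)
    (L : ℝ) {q : ℝ} (hq : 0 < q) : ∃ l > 0, ∀ i, L * l ^ (-α i) ≤ q := by
  have h : ∀ᶠ l in atTop, ∀ i, L * l ^ (-α i) ≤ q := eventually_all.2 fun i =>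
    (((tendsto_rpow_neg_atTop (hα i)).const_mul L).eventually (ge_mem_nhds (by simpa using hq)))
  exact ((eventually_gt_atTop 0).and h).exists

section Volterra

variable {d : ℕ} {T : ℝ} (α : Fin d → ℝ) (f : ℝ → (Fin d → ℂ) → Fin d → ℂ) (x₀ : Fin d → ℂ)

noncomputable def volterraRHS (x : ℝ → Fin d → ℂ) (t : ℝ) : Fin d → ℂ :=
  fun i => x₀ i + riemannLiouville (α i) (fun s => f s (x s) i) t

variable {α f x₀}

lemma volterraRHS_congr {x y : ℝ → Fin d → ℂ} (h : EqOn x y (Icc 0 T)) {t : ℝ}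
    (ht : t ∈ Icc 0 T) : volterraRHS α f x₀ x t = volterraRHS α f x₀ y t := by
  refine funext fun i => congrArg _ (riemannLiouville_congr fun s hs => ?_)
  rw [uIcc_of_le ht.1] at hs
  simp only [h ⟨hs.1, hs.2.trans ht.2⟩]

lemma continuousOn_volterraRHS (hα : ∀ i, 0 < α i)
    (hf : ContinuousOn (fun p : ℝ × (Fin d → ℂ) => f p.1 p.2) (Icc 0 T ×ˢ univ))
    {x : ℝ → Fin d → ℂ} (hx : ContinuousOn x (Icc 0 T)) :
    ContinuousOn (volterraRHS α f x₀ x) (Icc 0 T) :=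
  continuousOn_pi.2 fun i => continuousOn_const.add <| continuousOn_riemannLiouville (hα i) <|
    (continuous_apply i).comp_continuousOn <|
      hf.comp (continuousOn_id.prodMk hx) fun _ hs => ⟨hs, mem_univ _⟩

lemma norm_volterraRHS_sub_le (hα : ∀ i, 0 < α i)
    (hf : ContinuousOn (fun p : ℝ × (Fin d → ℂ) => f p.1 p.2) (Icc 0 T ×ˢ univ))
    {L : ℝ} (hL : 0 ≤ L)
    (hLip : ∀ i, ∀ t ∈ Icc (0 : ℝ) T, ∀ y z : Fin d → ℂ, ‖f t y i - f t z i‖ ≤ L * ‖y - z‖)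
    {l q C : ℝ} (hl : 0 < l) (hq : 0 ≤ q) (hlq : ∀ i, L * l ^ (-α i) ≤ q) (hC : 0 ≤ C)
    {x y : ℝ → Fin d → ℂ} (hx : ContinuousOn x (Icc 0 T)) (hy : ContinuousOn y (Icc 0 T))
    (hxy : ∀ s ∈ Icc 0 T, ‖x s - y s‖ ≤ C * Real.exp (l * s)) {t : ℝ} (ht : t ∈ Icc 0 T) :
    ‖volterraRHS α f x₀ x t - volterraRHS α f x₀ y t‖ ≤ q * C * Real.exp (l * t) := by
  refine (pi_norm_le_iff_of_nonneg (by positivity)).2 fun i => ?_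
  have hcomp : ∀ z : ℝ → Fin d → ℂ, ContinuousOn z (Icc 0 T) →
      ContinuousOn (fun s => f s (z s) i) (uIcc 0 t) := fun z hz =>
    ((continuous_apply i).comp_continuousOn <|
      hf.comp (continuousOn_id.prodMk hz) fun _ hs => ⟨hs, mem_univ _⟩).mono
      (by rw [uIcc_of_le ht.1]; exact Icc_subset_Icc_right ht.2)
  have hdiff : volterraRHS α f x₀ x t i - volterraRHS α f x₀ y t i
      = riemannLiouville (α i) ((fun s => f s (x s) i) - fun s => f s (y s) i) t := by
    rw [riemannLiouville_sub (hα i) (hcomp x hx) (hcomp y hy)]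
    simp only [volterraRHS, add_sub_add_left_eq_sub]
  have hbound : ∀ s ∈ Icc 0 t, ‖f s (x s) i - f s (y s) i‖ ≤ L * C * Real.exp (l * s) :=
    fun s hs => by
      have hs' : s ∈ Icc 0 T := ⟨hs.1, hs.2.trans ht.2⟩
      rw [mul_assoc]
      exact (hLip i s hs' _ _).trans (mul_le_mul_of_nonneg_left (hxy s hs') hL)
  rw [Pi.sub_apply, hdiff]
  calc _ ≤ L * C * l ^ (-α i) * Real.exp (l * t) :=
        norm_riemannLiouville_le_of_le_exp (hα i) hl ht.1 hbound
    _ = L * l ^ (-α i) * C * Real.exp (l * t) := by ring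
    _ ≤ q * C * Real.exp (l * t) := by gcongr; exact hlq i

theorem existsUnique_continuousMap_volterraRHS_eq (hT : 0 ≤ T) (hα : ∀ i, 0 < α i)
    (hf : ContinuousOn (fun p : ℝ × (Fin d → ℂ) => f p.1 p.2) (Icc 0 T ×ˢ univ))
    {L : ℝ} (hL : 0 ≤ L)
    (hLip : ∀ i, ∀ t ∈ Icc (0 : ℝ) T, ∀ y z : Fin d → ℂ, ‖f t y i - f t z i‖ ≤ L * ‖y - z‖) :
    ∃! u : C(Icc 0 T, Fin d → ℂ), ∀ t : Icc 0 T, volterraRHS α f x₀ (IccExtend hT u) t = u t := by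
  obtain ⟨l, hl, hlα⟩ := exists_pos_forall_mul_rpow_neg_le hα L one_half_pos
  have hext : ∀ u : C(Icc 0 T, Fin d → ℂ), ContinuousOn (IccExtend hT u) (Icc 0 T) :=
    fun u => u.continuous.Icc_extend'.continuousOn
  let P : C(Icc 0 T, Fin d → ℂ) → C(Icc 0 T, Fin d → ℂ) := fun u =>
    ⟨(Icc 0 T).domRestrict (volterraRHS α f x₀ (IccExtend hT u)),
      (continuousOn_volterraRHS hα hf (hext u)).domRestrict⟩
  have hP := ContinuousMap.existsUnique_fixedPoint_of_weighted_contraction P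
    (fun t => Real.exp (l * t)) (W := Real.exp (l * T))
    (fun t => Real.one_le_exp (mul_nonneg hl.le t.2.1))
    (fun t => Real.exp_le_exp.2 (mul_le_mul_of_nonneg_left t.2.2 hl.le))
    one_half_pos.le one_half_lt_one fun u v C hC huv t =>
      norm_volterraRHS_sub_le hα hf hL hLip hl one_half_pos.le hlα hC (hext u) (hext v)
        (fun s hs => by simpa only [IccExtend_of_mem _ _ hs] using huv ⟨s, hs⟩) t.2
  simpa only [P, ContinuousMap.ext_iff, ContinuousMap.coe_mk, domRestrict_apply] using hP

end Volterra

theorem stmt_0_general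
    (T : ℝ) (hT : 0 < T) (d : ℕ)
    (α : Fin d → ℝ) (hα : ∀ i, α i ∈ Set.Ioc (0 : ℝ) 1)
    (f : ℝ → (Fin d → ℂ) → (Fin d → ℂ))
    (hf : ContinuousOn (fun p : ℝ × (Fin d → ℂ) => f p.1 p.2)
        (Set.Icc 0 T ×ˢ Set.univ))
    (L : ℝ) (hL : 0 < L)
    (hLip : ∀ i, ∀ t ∈ Set.Icc (0 : ℝ) T, ∀ y z : Fin d → ℂ,
        ‖f t y i - f t z i‖ ≤ L * ‖y - z‖)
    (x₀ : Fin d → ℂ) :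
    ∃ x : ℝ → (Fin d → ℂ),
      (ContinuousOn x (Set.Icc 0 T) ∧
        ∀ t ∈ Set.Icc (0 : ℝ) T, ∀ i : Fin d,
          x t i = x₀ i + (Real.Gamma (α i))⁻¹ •
            ∫ s in (0 : ℝ)..t, ((t - s) ^ (α i - 1) : ℝ) • f s (x s) i) ∧
      ∀ y : ℝ → (Fin d → ℂ),
        (ContinuousOn y (Set.Icc 0 T) ∧
          ∀ t ∈ Set.Icc (0 : ℝ) T, ∀ i : Fin d,
            y t i = x₀ i + (Real.Gamma (α i))⁻¹ •
              ∫ s in (0 : ℝ)..t, ((t - s) ^ (α i - 1) : ℝ) • f s (y s) i) →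
        Set.EqOn y x (Set.Icc 0 T) := by
  obtain ⟨u, hu, huniq⟩ := existsUnique_continuousMap_volterraRHS_eq (x₀ := x₀) hT.le
    (fun i => (hα i).1) hf hL.le hLip
  refine ⟨IccExtend hT.le u, ⟨u.continuous.Icc_extend'.continuousOn, fun t ht => ?_⟩, ?_⟩
  · rw [IccExtend_of_mem _ _ ht, ← hu ⟨t, ht⟩]
    exact fun i => rfl
  · rintro y ⟨hy, hyRHS⟩ t ht
    let v : C(Icc 0 T, Fin d → ℂ) := ⟨(Icc 0 T).domRestrict y, hy.domRestrict⟩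
    have hvy : EqOn (IccExtend hT.le v) y (Icc 0 T) := fun s hs => IccExtend_of_mem _ _ hs
    have hv : v = u := huniq v fun s =>
      (volterraRHS_congr hvy s.2).trans (funext (hyRHS s s.2)).symm
    rw [← hvy ht, hv]

theorem stmt_0
    (T : ℝ) (hT : 0 < T) (d : ℕ) (hd : 1 ≤ d)
    (α : Fin d → ℝ) (hα : ∀ i, α i ∈ Set.Ioc (0 : ℝ) 1)
    (f : ℝ → (Fin d → ℂ) → (Fin d → ℂ))
    (hf : ContinuousOn (fun p : ℝ × (Fin d → ℂ) => f p.1 p.2)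
        (Set.Icc 0 T ×ˢ Set.univ))
    (L : ℝ) (hL : 0 < L)
    (hLip : ∀ i, ∀ t ∈ Set.Icc (0 : ℝ) T, ∀ y z : Fin d → ℂ,
        ‖f t y i - f t z i‖ ≤ L * ‖y - z‖)
    (x₀ : Fin d → ℂ) :
    ∃ x : ℝ → (Fin d → ℂ),
      (ContinuousOn x (Set.Icc 0 T) ∧
        ∀ t ∈ Set.Icc (0 : ℝ) T, ∀ i : Fin d,
          x t i = x₀ i + (Real.Gamma (α i))⁻¹ •
            ∫ s in (0 : ℝ)..t, ((t - s) ^ (α i - 1) : ℝ) • f s (x s) i) ∧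
      ∀ y : ℝ → (Fin d → ℂ),
        (ContinuousOn y (Set.Icc 0 T) ∧
          ∀ t ∈ Set.Icc (0 : ℝ) T, ∀ i : Fin d,
            y t i = x₀ i + (Real.Gamma (α i))⁻¹ •
              ∫ s in (0 : ℝ)..t, ((t - s) ^ (α i - 1) : ℝ) • f s (y s) i) →
        Set.EqOn y x (Set.Icc 0 T) :=
  stmt_0_general T hT d α hα f hf L hL hLip x₀
end

section
/- Let α₁, α₂ ∈ (0,1], a_{ij} ∈ ℂ (i,j ∈ {1,2}), x₁⁰, x₂⁰ ∈ ℂ, and define coefficients b_{1kℓ}, b_{2kℓ} (k, ℓ ≥ 0) recursively by: b_{100} = x₁⁰, b_{200} = x₂⁰, b_{10ℓ} = 0 for ℓ ≥ 1, b_{2k0} = 0 for k ≥ 1, and b_{1,k+1,ℓ} = [Γ(kα₁+ℓα₂+1)/Γ((k+1)α₁+ℓα₂+1)](a₁₁ b_{1kℓ} + a₁₂ b_{2kℓ}), b_{2,k,ℓ+1} = [Γ(kα₁+ℓα₂+1)/Γ(kα₁+(ℓ+1)α₂+1)](a₂₁ b_{1kℓ} + a₂₂ b_{2kℓ}). Then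 for j ∈ {1,2} the double series s_j(z) = Σ_{k,ℓ≥0} |b_{jkℓ}| z^{k+ℓ} converges for every z ∈ ℂ. -/
/-!
Weighting the coefficients by `G k l = Γ(k α₁ + l α₂ + 1)` cancels the Gamma quotients in the
recursion: `G k l (‖b₁ₖₗ‖ + ‖b₂ₖₗ‖)` is at most `A = Σ ‖aᵢⱼ‖` times the sum of the same quantity
at the predecessors `(k - 1, l)` and `(k, l - 1)`, so by induction on `k + l` it is at most
`(‖b₁₀₀‖ + ‖b₂₀₀‖) (2A)^(k+l)`. With `α = min α₁ α₂`, the Gamma factor dominates `⌊α (k + l)⌋!`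
once `α (k + l) ≥ 1`, and `ρⁿ / ⌊α n⌋!` is summable for every `ρ`.
-/

open Filter Topology Finset
open scoped Nat

theorem add_le_mul_pow_of_recursion {u v : ℕ → ℕ → ℝ} {A : ℝ} (hA : 0 ≤ A)
    (hu : ∀ k l, 0 ≤ u k l) (hv : ∀ k l, 0 ≤ v k l)
    (hu_zero : ∀ l, u 0 (l + 1) = 0) (hv_zero : ∀ k, v (k + 1) 0 = 0)
    (hu_succ : ∀ k l, u (k + 1) l ≤ A * (u k l + v k l))
    (hv_succ : ∀ k l, v k (l + 1) ≤ A * (u k l + v k l)) (k l : ℕ) :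
    u k l + v k l ≤ (u 0 0 + v 0 0) * (2 * A) ^ (k + l) := by
  set C := u 0 0 + v 0 0
  have hC : 0 ≤ C := add_nonneg (hu 0 0) (hv 0 0)
  suffices ∀ n k l, k + l = n → u k l + v k l ≤ C * (2 * A) ^ n from this _ k l rfl
  intro n
  induction n with
  | zero =>
    intro k l h
    obtain ⟨rfl, rfl⟩ : k = 0 ∧ l = 0 := by omega
    simp [C]
  | succ n ih =>
    have hu' : ∀ k l, k + l = n + 1 → u k l ≤ A * (C * (2 * A) ^ n) := by
      rintro (_ | k) l h
      · obtain rfl : l = n + 1 := by omega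
        rw [hu_zero]
        positivity
      · exact (hu_succ k l).trans (by gcongr; exact ih k l (by omega))
    have hv' : ∀ k l, k + l = n + 1 → v k l ≤ A * (C * (2 * A) ^ n) := by
      rintro k (_ | l) h
      · obtain rfl : k = n + 1 := by omega
        rw [hv_zero]
        positivity
      · exact (hv_succ k l).trans (by gcongr; exact ih k l (by omega))
    intro k l h
    calc u k l + v k l ≤ A * (C * (2 * A) ^ n) + A * (C * (2 * A) ^ n) :=
          add_le_add (hu' k l h) (hv' k l h)
      _ = C * (2 * A) ^ (n + 1) := by ring

theorem Real.factorial_floor_le_Gamma_add_one {x : ℝ} (hx : 1 ≤ x) :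
    (⌊x⌋₊ ! : ℝ) ≤ Real.Gamma (x + 1) := by
  have hfloor : (1 : ℝ) ≤ ⌊x⌋₊ := by exact_mod_cast Nat.one_le_floor_iff _ |>.mpr hx
  rw [← Real.Gamma_nat_eq_factorial]
  refine Real.Gamma_strictMonoOn_Ici.monotoneOn ?_ ?_ ?_
  · simp only [Set.mem_Ici]; linarith
  · simp only [Set.mem_Ici]; linarith
  · linarith [Nat.floor_le (zero_le_one.trans hx)]

theorem tendsto_pow_div_factorial_floor_mul {α : ℝ} (hα : 0 < α) (ρ : ℝ) :
    Tendsto (fun n : ℕ => ρ ^ n / (⌊α * n⌋₊ ! : ℝ)) atTop (𝓝 0) := by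
  set R := max |ρ| 1
  set p := ⌈α⁻¹⌉₊
  have hfloor : Tendsto (fun n : ℕ => ⌊α * n⌋₊) atTop atTop :=
    tendsto_nat_floor_atTop.comp (tendsto_natCast_atTop_atTop.const_mul_atTop hα)
  have hlim : Tendsto (fun n : ℕ => R ^ p * ((R ^ p) ^ ⌊α * n⌋₊ / (⌊α * n⌋₊ ! : ℝ)))
      atTop (𝓝 0) := by
    simpa using ((FloorSemiring.tendsto_pow_div_factorial_atTop (R ^ p)).comp hfloor).const_mul
      (R ^ p)
  refine squeeze_zero_norm (fun n => ?_) hlim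
  set m := ⌊α * n⌋₊
  -- with `p = ⌈α⁻¹⌉₊`, `|ρ| ^ n ≤ (R ^ p) ^ (m + 1)`
  have hn : n ≤ p * (m + 1) := by
    have h1 : α * n < m + 1 := Nat.lt_floor_add_one _
    have h2 : α⁻¹ ≤ p := Nat.le_ceil _
    have h3 : (n : ℝ) < p * (m + 1) := by
      calc (n : ℝ) = α⁻¹ * (α * n) := by field_simp
        _ < α⁻¹ * (m + 1) := by gcongr
        _ ≤ p * (m + 1) := by gcongr
    exact_mod_cast h3.le
  have hR : 1 ≤ R := le_max_right _ _
  rw [norm_div, norm_pow, Real.norm_eq_abs, RCLike.norm_natCast, ← mul_div_assoc, ← pow_succ',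
    ← pow_mul]
  gcongr
  calc |ρ| ^ n ≤ R ^ n := by gcongr; exact le_max_left _ _
    _ ≤ R ^ (p * (m + 1)) := pow_le_pow_right₀ hR hn

theorem summable_pow_div_factorial_floor_mul {α : ℝ} (hα : 0 < α) (ρ : ℝ) :
    Summable (fun n : ℕ => ρ ^ n / (⌊α * n⌋₊ ! : ℝ)) := by
  have hsmall : ∀ᶠ n : ℕ in atTop, ‖(2 * ρ) ^ n / (⌊α * n⌋₊ ! : ℝ)‖ ≤ 1 :=
    (tendsto_pow_div_factorial_floor_mul hα (2 * ρ)).norm.eventually_le_const (by norm_num)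
  refine .of_norm_bounded_eventually_nat summable_geometric_two ?_
  filter_upwards [hsmall] with n hn
  calc ‖ρ ^ n / (⌊α * n⌋₊ ! : ℝ)‖ = (1 / 2) ^ n * ‖(2 * ρ) ^ n / (⌊α * n⌋₊ ! : ℝ)‖ := by
        rw [← Real.norm_of_nonneg (by positivity : (0 : ℝ) ≤ (1 / 2) ^ n), ← norm_mul,
          mul_div_assoc', ← mul_pow, ← mul_assoc, one_div, inv_mul_cancel₀ two_ne_zero, one_mul]
    _ ≤ (1 / 2) ^ n := mul_le_of_le_one_right (by positivity) hn

theorem summable_sum_norm_antidiagonal_mul_pow {E : Type*} [SeminormedAddCommGroup E]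
    {α₁ α₂ C M r : ℝ} (hα₁ : 0 < α₁) (hα₂ : 0 < α₂) (hM : 0 ≤ M) (hr : 0 ≤ r)
    {c : ℕ → ℕ → E}
    (hc : ∀ k l : ℕ, ‖c k l‖ ≤ C * M ^ (k + l) / Real.Gamma (k * α₁ + l * α₂ + 1)) :
    Summable (fun n : ℕ => (∑ μ ∈ range (n + 1), ‖c μ (n - μ)‖) * r ^ n) := by
  set α := min α₁ α₂
  have hα : 0 < α := lt_min hα₁ hα₂
  have hC : 0 ≤ C := (norm_nonneg _).trans (by simpa using hc 0 0)
  -- `Γ` is monotone only on `[2, ∞)`, so the factorial bound needs `α n ≥ 1`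
  have hlarge : ∀ᶠ n : ℕ in atTop, 1 ≤ α * n :=
    (tendsto_natCast_atTop_atTop.const_mul_atTop hα).eventually_ge_atTop 1
  refine .of_norm_bounded_eventually_nat
    ((summable_pow_div_factorial_floor_mul hα (2 * M * r)).mul_left C) ?_
  filter_upwards [hlarge] with n hn
  set m := ⌊α * n⌋₊
  have hm : (0 : ℝ) < m ! := by positivity
  have hterm : ∀ μ ∈ range (n + 1), ‖c μ (n - μ)‖ ≤ C * M ^ n / m ! := by
    intro μ hμ
    have hμn : μ ≤ n := Nat.lt_succ_iff.mp (mem_range.mp hμ)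
    have hαx : α * n ≤ μ * α₁ + ((n - μ : ℕ) : ℝ) * α₂ := by
      have : (n : ℝ) = μ + ((n - μ : ℕ) : ℝ) := by rw [Nat.cast_sub hμn]; ring
      rw [this, mul_add, mul_comm α, mul_comm α]
      gcongr
      exacts [min_le_left _ _, min_le_right _ _]
    have hΓ : (m ! : ℝ) ≤ Real.Gamma (μ * α₁ + ((n - μ : ℕ) : ℝ) * α₂ + 1) :=
      (Nat.cast_le.mpr (Nat.factorial_le (Nat.floor_mono hαx))).trans
        (Real.factorial_floor_le_Gamma_add_one (hn.trans hαx))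
    calc ‖c μ (n - μ)‖ ≤ C * M ^ n / Real.Gamma (μ * α₁ + ((n - μ : ℕ) : ℝ) * α₂ + 1) := by
          simpa [Nat.add_sub_cancel' hμn] using hc μ (n - μ)
      _ ≤ C * M ^ n / m ! := div_le_div_of_nonneg_left (by positivity) hm hΓ
  have hn2 : (n : ℝ) + 1 ≤ 2 ^ n := by exact_mod_cast Nat.lt_two_pow_self
  rw [Real.norm_of_nonneg (by positivity)]
  calc (∑ μ ∈ range (n + 1), ‖c μ (n - μ)‖) * r ^ n
      ≤ (∑ μ ∈ range (n + 1), C * M ^ n / m !) * r ^ n := by gcongr with μ hμ; exact hterm μ hμ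
    _ = C * (((n : ℝ) + 1) * (M * r) ^ n / m !) := by
        rw [sum_const, card_range, nsmul_eq_mul, mul_pow]; push_cast; ring
    _ ≤ C * ((2 * M * r) ^ n / m !) := by
        rw [mul_assoc 2, mul_pow 2]
        gcongr

theorem mul_norm_le_of_eq_ofReal_div_mul {g g' : ℝ} (hg : 0 ≤ g) (hg' : 0 < g') {a a' x y b : ℂ}
    (hb : b = ((g / g' : ℝ) : ℂ) * (a * x + a' * y)) :
    g' * ‖b‖ ≤ (‖a‖ + ‖a'‖) * (g * ‖x‖ + g * ‖y‖) := by
  rw [hb, norm_mul, Complex.norm_real, Real.norm_of_nonneg (by positivity), ← mul_assoc,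
    mul_div_cancel₀ _ hg'.ne']
  calc g * ‖a * x + a' * y‖ ≤ g * (‖a‖ * ‖x‖ + ‖a'‖ * ‖y‖) := by
        gcongr
        exact (norm_add_le _ _).trans (by rw [norm_mul, norm_mul])
    _ ≤ (‖a‖ + ‖a'‖) * (g * ‖x‖ + g * ‖y‖) := by
        nlinarith [mul_nonneg (mul_nonneg hg (norm_nonneg a)) (norm_nonneg y),
          mul_nonneg (mul_nonneg hg (norm_nonneg a')) (norm_nonneg x)]

theorem norm_add_norm_le_of_gamma_recursion {α₁ α₂ : ℝ} (hα₁ : 0 ≤ α₁) (hα₂ : 0 ≤ α₂)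
    {a₁₁ a₁₂ a₂₁ a₂₂ : ℂ} {b1 b2 : ℕ → ℕ → ℂ}
    (h10l : ∀ l : ℕ, b1 0 (l + 1) = 0) (h2k0 : ∀ k : ℕ, b2 (k + 1) 0 = 0)
    (hrec1 : ∀ k l : ℕ,
      b1 (k + 1) l =
        ((Real.Gamma (k * α₁ + l * α₂ + 1) /
          Real.Gamma ((k + 1) * α₁ + l * α₂ + 1) : ℝ) : ℂ) *
          (a₁₁ * b1 k l + a₁₂ * b2 k l))
    (hrec2 : ∀ k l : ℕ,
      b2 k (l + 1) =
        ((Real.Gamma (k * α₁ + l * α₂ + 1) /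
          Real.Gamma (k * α₁ + (l + 1) * α₂ + 1) : ℝ) : ℂ) *
          (a₂₁ * b1 k l + a₂₂ * b2 k l)) (k l : ℕ) :
    ‖b1 k l‖ + ‖b2 k l‖ ≤ (‖b1 0 0‖ + ‖b2 0 0‖) *
      (2 * (‖a₁₁‖ + ‖a₁₂‖ + ‖a₂₁‖ + ‖a₂₂‖)) ^ (k + l) / Real.Gamma (k * α₁ + l * α₂ + 1) := by
  set G : ℕ → ℕ → ℝ := fun i j => Real.Gamma (i * α₁ + j * α₂ + 1)
  have hG : ∀ i j, 0 < G i j := fun i j => Real.Gamma_pos_of_pos (by positivity)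
  have hweighted := add_le_mul_pow_of_recursion (A := ‖a₁₁‖ + ‖a₁₂‖ + ‖a₂₁‖ + ‖a₂₂‖)
    (u := fun i j => G i j * ‖b1 i j‖) (v := fun i j => G i j * ‖b2 i j‖) (by positivity)
    (fun i j => by have := hG i j; positivity) (fun i j => by have := hG i j; positivity)
    (fun j => by simp [h10l j]) (fun i => by simp [h2k0 i])
    (fun i j => by
      simp only [G, Nat.cast_succ]
      refine (mul_norm_le_of_eq_ofReal_div_mul (hG i j).le
        (Real.Gamma_pos_of_pos (by positivity)) (hrec1 i j)).trans ?_
      gcongr ?_ * _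
      linarith [norm_nonneg a₂₁, norm_nonneg a₂₂])
    (fun i j => by
      simp only [G, Nat.cast_succ]
      refine (mul_norm_le_of_eq_ofReal_div_mul (hG i j).le
        (Real.Gamma_pos_of_pos (by positivity)) (hrec2 i j)).trans ?_
      gcongr ?_ * _
      linarith [norm_nonneg a₁₁, norm_nonneg a₁₂])
  have hG00 : G 0 0 = 1 := by simp [G]
  rw [le_div_iff₀ (hG k l), mul_comm, mul_add]
  simpa only [hG00, one_mul] using hweighted k l

theorem stmt_3_general
    (α₁ α₂ : ℝ) (hα₁ : α₁ ∈ Set.Ioc (0 : ℝ) 1) (hα₂ : α₂ ∈ Set.Ioc (0 : ℝ) 1)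
    (a₁₁ a₁₂ a₂₁ a₂₂ : ℂ)
    (b1 b2 : ℕ → ℕ → ℂ)
    (h10l : ∀ l : ℕ, 1 ≤ l → b1 0 l = 0)
    (h2k0 : ∀ k : ℕ, 1 ≤ k → b2 k 0 = 0)
    (hrec1 : ∀ k l : ℕ,
      b1 (k + 1) l =
        ((Real.Gamma (k * α₁ + l * α₂ + 1) /
          Real.Gamma ((k + 1) * α₁ + l * α₂ + 1) : ℝ) : ℂ) *
          (a₁₁ * b1 k l + a₁₂ * b2 k l))
    (hrec2 : ∀ k l : ℕ,
      b2 k (l + 1) =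
        ((Real.Gamma (k * α₁ + l * α₂ + 1) /
          Real.Gamma (k * α₁ + (l + 1) * α₂ + 1) : ℝ) : ℂ) *
          (a₂₁ * b1 k l + a₂₂ * b2 k l)) :
    ∀ z : ℂ,
      Summable (fun k : ℕ =>
        (∑ μ ∈ Finset.range (k + 1), ‖b1 μ (k - μ)‖) *
          ‖z‖ ^ k) ∧
      Summable (fun k : ℕ =>
        (∑ μ ∈ Finset.range (k + 1), ‖b2 μ (k - μ)‖) *
          ‖z‖ ^ k) := by
  intro z
  obtain ⟨hα₁, -⟩ := hα₁
  obtain ⟨hα₂, -⟩ := hα₂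
  have hbound := norm_add_norm_le_of_gamma_recursion hα₁.le hα₂.le
    (fun l => h10l (l + 1) le_add_self) (fun k => h2k0 (k + 1) le_add_self) hrec1 hrec2
  exact ⟨summable_sum_norm_antidiagonal_mul_pow hα₁ hα₂ (by positivity) (norm_nonneg z)
      fun k l => (le_add_of_nonneg_right (norm_nonneg _)).trans (hbound k l),
    summable_sum_norm_antidiagonal_mul_pow hα₁ hα₂ (by positivity) (norm_nonneg z)
      fun k l => (le_add_of_nonneg_left (norm_nonneg _)).trans (hbound k l)⟩

theorem stmt_3
    (α₁ α₂ : ℝ) (hα₁ : α₁ ∈ Set.Ioc (0 : ℝ) 1) (hα₂ : α₂ ∈ Set.Ioc (0 : ℝ) 1)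
    (a₁₁ a₁₂ a₂₁ a₂₂ x₁ x₂ : ℂ)
    (b1 b2 : ℕ → ℕ → ℂ)
    (h100 : b1 0 0 = x₁) (h200 : b2 0 0 = x₂)
    (h10l : ∀ l : ℕ, 1 ≤ l → b1 0 l = 0)
    (h2k0 : ∀ k : ℕ, 1 ≤ k → b2 k 0 = 0)
    (hrec1 : ∀ k l : ℕ,
      b1 (k + 1) l =
        ((Real.Gamma (k * α₁ + l * α₂ + 1) /
          Real.Gamma ((k + 1) * α₁ + l * α₂ + 1) : ℝ) : ℂ) *
          (a₁₁ * b1 k l + a₁₂ * b2 k l))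
    (hrec2 : ∀ k l : ℕ,
      b2 k (l + 1) =
        ((Real.Gamma (k * α₁ + l * α₂ + 1) /
          Real.Gamma (k * α₁ + (l + 1) * α₂ + 1) : ℝ) : ℂ) *
          (a₂₁ * b1 k l + a₂₂ * b2 k l)) :
    ∀ z : ℂ,
      Summable (fun k : ℕ =>
        (∑ μ ∈ Finset.range (k + 1), ‖b1 μ (k - μ)‖) *
          ‖z‖ ^ k) ∧
      Summable (fun k : ℕ =>
        (∑ μ ∈ Finset.range (k + 1), ‖b2 μ (k - μ)‖) *
          ‖z‖ ^ k) :=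
  stmt_3_general α₁ α₂ hα₁ hα₂ a₁₁ a₁₂ a₂₁ a₂₂ b1 b2 h10l h2k0 hrec1 hrec2
end

section
/- With the coefficients b_{jkℓ} of the previous recursion, let α* = min{α₁, α₂} and ā = max_{i,j} |a_{ij}|. Then there exists N such that for all k ≥ 0, β_{1,N+k} + β_{2,N+k} ≤ (2ā)^k Γ(Nα*+1)/Γ((N+k)α*+1) · (β_{1,N} + β_{2,N}), where β_{jk} = Σ_{μ=0}^k |b_{j,μ,k−μ}|. -/
/-!
Every coefficient on the diagonal `k + l = n + 1` is a ratio `Γ(s) / Γ(s + αᵢ)`, with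
`s = kα₁ + lα₂ + 1 ≥ nα* + 1`, times a combination of two coefficients on the diagonal `n`.
By log-convexity of `Γ` such a ratio decreases in `s`, and since `Γ` increases on `[2, ∞)` it
decreases in the increment as long as `s ≥ 2`. So once `Nα* ≥ 1`, every ratio beyond the diagonal
`N` is at most `Γ(nα* + 1) / Γ((n + 1)α* + 1)`, whence
`β_{n+1} ≤ 2ā Γ(nα* + 1) / Γ((n + 1)α* + 1) β_n`, and these factors telescope.
-/

open Finset Real

lemma ConvexOn.sub_le_sub_of_le {S : Set ℝ} {f : ℝ → ℝ} (hf : ConvexOn ℝ S f) {t s c : ℝ}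
    (ht : t ∈ S) (hs : s ∈ S) (htc : t + c ∈ S) (hsc : s + c ∈ S) (hts : t ≤ s) (hc : 0 ≤ c) :
    f (t + c) - f t ≤ f (s + c) - f s := by
  rcases hc.eq_or_lt with rfl | hc
  · simp
  have h₁ : (f (t + c) - f t) / c ≤ (f (s + c) - f t) / (s + c - t) := by
    simpa only [add_sub_cancel_left] using
      hf.secant_mono ht htc hsc (by linarith) (by linarith) (by linarith)
  have h₂ : (f (s + c) - f t) / (s + c - t) ≤ (f (s + c) - f s) / c := by
    have := hf.secant_mono hsc ht hs (by linarith) (by linarith) hts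
    rwa [← neg_div_neg_eq, neg_sub, neg_sub, ← neg_div_neg_eq (f s - _), neg_sub, neg_sub,
      add_sub_cancel_left] at this
  exact (div_le_div_iff_of_pos_right hc).1 (h₁.trans h₂)

lemma Real.Gamma_div_Gamma_add_le_of_le {t s c : ℝ} (ht : 0 < t) (hts : t ≤ s) (hc : 0 ≤ c) :
    Gamma s / Gamma (s + c) ≤ Gamma t / Gamma (t + c) := by
  have hs : 0 < s := ht.trans_le hts
  have hΓt := Gamma_pos_of_pos ht
  have hΓs := Gamma_pos_of_pos hs
  have htc := add_pos_of_pos_of_nonneg ht hc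
  have hsc := add_pos_of_pos_of_nonneg hs hc
  have hΓtc := Gamma_pos_of_pos htc
  have hΓsc := Gamma_pos_of_pos hsc
  have key := convexOn_log_Gamma.sub_le_sub_of_le ht hs htc hsc hts hc
  simp only [Function.comp_apply] at key
  rw [← log_div hΓtc.ne' hΓt.ne', ← log_div hΓsc.ne' hΓs.ne',
    log_le_log_iff (div_pos hΓtc hΓt) (div_pos hΓsc hΓs), div_le_div_iff₀ hΓt hΓs] at key
  rw [div_le_div_iff₀ hΓsc hΓtc]
  linarith

lemma Real.Gamma_div_Gamma_add_le {t s c c' : ℝ} (ht : 2 ≤ t) (hts : t ≤ s) (hc' : 0 ≤ c')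
    (hcc : c' ≤ c) : Gamma s / Gamma (s + c) ≤ Gamma t / Gamma (t + c') := by
  have hΓsc' : 0 < Gamma (s + c') := Gamma_pos_of_pos (by linarith)
  calc Gamma s / Gamma (s + c) ≤ Gamma s / Gamma (s + c') :=
        div_le_div_of_nonneg_left (Gamma_pos_of_pos (by linarith)).le hΓsc' <|
          Gamma_strictMonoOn_Ici.monotoneOn (by simp; linarith) (by simp; linarith) (by linarith)
    _ ≤ Gamma t / Gamma (t + c') := Gamma_div_Gamma_add_le_of_le (by linarith) hts hc'

lemma norm_mul_add_mul_le {R : Type*} [SeminormedRing R] {a a' u v : R} {A : ℝ} (ha : ‖a‖ ≤ A)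
    (ha' : ‖a'‖ ≤ A) : ‖a * u + a' * v‖ ≤ A * (‖u‖ + ‖v‖) :=
  calc ‖a * u + a' * v‖ ≤ ‖a‖ * ‖u‖ + ‖a'‖ * ‖v‖ :=
        (norm_add_le _ _).trans (add_le_add (norm_mul_le _ _) (norm_mul_le _ _))
    _ ≤ A * (‖u‖ + ‖v‖) := by rw [mul_add]; gcongr

lemma norm_ofReal_Gamma_div_mul_le {s c t c' A : ℝ} {a a' u v : ℂ} (ht : 2 ≤ t) (hts : t ≤ s)
    (hc' : 0 ≤ c') (hcc : c' ≤ c) (ha : ‖a‖ ≤ A) (ha' : ‖a'‖ ≤ A) :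
    ‖((Gamma s / Gamma (s + c) : ℝ) : ℂ) * (a * u + a' * v)‖ ≤
      Gamma t / Gamma (t + c') * A * (‖u‖ + ‖v‖) := by
  have hratio : 0 ≤ Gamma s / Gamma (s + c) :=
    div_nonneg (Gamma_nonneg_of_nonneg (by linarith)) (Gamma_nonneg_of_nonneg (by linarith))
  rw [norm_mul, Complex.norm_real, norm_of_nonneg hratio, mul_assoc]
  exact mul_le_mul (Gamma_div_Gamma_add_le ht hts hc' hcc) (norm_mul_add_mul_le ha ha')
    (norm_nonneg _) (hratio.trans (Gamma_div_Gamma_add_le ht hts hc' hcc))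

lemma le_pow_mul_div_of_forall_succ_le {u g : ℕ → ℝ} {C : ℝ} {N : ℕ} (hC : 0 ≤ C)
    (hg : ∀ n, 0 < g n) (hu : ∀ n, N ≤ n → u (n + 1) ≤ C * (g n / g (n + 1)) * u n) (k : ℕ) :
    u (N + k) ≤ C ^ k * g N / g (N + k) * u N := by
  induction k with
  | zero => simp [(hg N).ne']
  | succ k ih =>
    calc u (N + (k + 1)) ≤ C * (g (N + k) / g (N + k + 1)) * u (N + k) :=
          hu _ (N.le_add_right k)
      _ ≤ C * (g (N + k) / g (N + k + 1)) * (C ^ k * g N / g (N + k) * u N) :=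
          mul_le_mul_of_nonneg_left ih (mul_nonneg hC (div_pos (hg _) (hg _)).le)
      _ = C ^ (k + 1) * g N / g (N + (k + 1)) * u N := by
          rw [← add_assoc]
          field_simp [(hg (N + k)).ne']
          ring

section DiagonalSums

variable {E : Type*} [SeminormedAddGroup E]

def diagNormSum (b : ℕ → ℕ → E) (n : ℕ) : ℝ := ∑ p ∈ antidiagonal n, ‖b p.1 p.2‖

lemma diagNormSum_eq_sum_range (b : ℕ → ℕ → E) (n : ℕ) :
    diagNormSum b n = ∑ μ ∈ range (n + 1), ‖b μ (n - μ)‖ :=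
  Nat.sum_antidiagonal_eq_sum_range_succ (fun k l => ‖b k l‖) n

lemma diagNormSum_succ_of_left_eq_zero {b : ℕ → ℕ → E} {n : ℕ} (h : b 0 (n + 1) = 0) :
    diagNormSum b (n + 1) = ∑ p ∈ antidiagonal n, ‖b (p.1 + 1) p.2‖ := by
  simp [diagNormSum, Nat.sum_antidiagonal_succ, h]

lemma diagNormSum_succ_of_right_eq_zero {b : ℕ → ℕ → E} {n : ℕ} (h : b (n + 1) 0 = 0) :
    diagNormSum b (n + 1) = ∑ p ∈ antidiagonal n, ‖b p.1 (p.2 + 1)‖ := by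
  simp [diagNormSum, Nat.sum_antidiagonal_succ', h]

lemma sum_antidiagonal_le_mul_diagNormSum_add {f : ℕ × ℕ → ℝ} {b₁ b₂ : ℕ → ℕ → E} {C : ℝ}
    {n : ℕ} (h : ∀ p ∈ antidiagonal n, f p ≤ C * (‖b₁ p.1 p.2‖ + ‖b₂ p.1 p.2‖)) :
    ∑ p ∈ antidiagonal n, f p ≤ C * (diagNormSum b₁ n + diagNormSum b₂ n) := by
  rw [diagNormSum, diagNormSum, ← sum_add_distrib, mul_sum]
  exact sum_le_sum h

end DiagonalSums

lemma diagNormSum_add_succ_le {α₁ α₂ αstar A : ℝ} {a₁₁ a₁₂ a₂₁ a₂₂ : ℂ} {b1 b2 : ℕ → ℕ → ℂ}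
    (hα₁ : αstar ≤ α₁) (hα₂ : αstar ≤ α₂) (hαstar : 0 ≤ αstar)
    (ha₁₁ : ‖a₁₁‖ ≤ A) (ha₁₂ : ‖a₁₂‖ ≤ A) (ha₂₁ : ‖a₂₁‖ ≤ A) (ha₂₂ : ‖a₂₂‖ ≤ A)
    (hrec1 : ∀ k l : ℕ,
      b1 (k + 1) l =
        ((Gamma (k * α₁ + l * α₂ + 1) / Gamma ((k + 1) * α₁ + l * α₂ + 1) : ℝ) : ℂ) *
          (a₁₁ * b1 k l + a₁₂ * b2 k l))
    (hrec2 : ∀ k l : ℕ,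
      b2 k (l + 1) =
        ((Gamma (k * α₁ + l * α₂ + 1) / Gamma (k * α₁ + (l + 1) * α₂ + 1) : ℝ) : ℂ) *
          (a₂₁ * b1 k l + a₂₂ * b2 k l))
    {n : ℕ} (hb1 : b1 0 (n + 1) = 0) (hb2 : b2 (n + 1) 0 = 0) (hn : 1 ≤ n * αstar) :
    diagNormSum b1 (n + 1) + diagNormSum b2 (n + 1) ≤
      2 * A * (Gamma (n * αstar + 1) / Gamma ((n + 1 : ℕ) * αstar + 1)) *
        (diagNormSum b1 n + diagNormSum b2 n) := by
  have ht : 2 ≤ n * αstar + 1 := by linarith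
  have hts : ∀ p ∈ antidiagonal n, n * αstar + 1 ≤ p.1 * α₁ + p.2 * α₂ + 1 := by
    intro p hp
    rw [← mem_antidiagonal.1 hp, Nat.cast_add, add_mul]
    gcongr
  set ρ := Gamma (n * αstar + 1) / Gamma (n * αstar + 1 + αstar)
  have hsum1 : diagNormSum b1 (n + 1) ≤ ρ * A * (diagNormSum b1 n + diagNormSum b2 n) := by
    rw [diagNormSum_succ_of_left_eq_zero hb1]
    refine sum_antidiagonal_le_mul_diagNormSum_add fun p hp => ?_
    rw [hrec1, add_one_mul, add_right_comm _ α₁, add_right_comm _ α₁]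
    exact norm_ofReal_Gamma_div_mul_le ht (hts p hp) hαstar hα₁ ha₁₁ ha₁₂
  have hsum2 : diagNormSum b2 (n + 1) ≤ ρ * A * (diagNormSum b1 n + diagNormSum b2 n) := by
    rw [diagNormSum_succ_of_right_eq_zero hb2]
    refine sum_antidiagonal_le_mul_diagNormSum_add fun p hp => ?_
    rw [hrec2, add_one_mul, ← add_assoc, add_right_comm _ α₂]
    exact norm_ofReal_Gamma_div_mul_le ht (hts p hp) hαstar hα₂ ha₂₁ ha₂₂
  calc _ ≤ ρ * A * (diagNormSum b1 n + diagNormSum b2 n) +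
        ρ * A * (diagNormSum b1 n + diagNormSum b2 n) := add_le_add hsum1 hsum2
    _ = _ := by
      rw [Nat.cast_succ, add_one_mul, add_right_comm]
      ring

theorem stmt_4_general
    (α₁ α₂ : ℝ) (hα₁ : α₁ ∈ Set.Ioc (0 : ℝ) 1) (hα₂ : α₂ ∈ Set.Ioc (0 : ℝ) 1)
    (a₁₁ a₁₂ a₂₁ a₂₂ : ℂ)
    (b1 b2 : ℕ → ℕ → ℂ)
    (h10l : ∀ l : ℕ, 1 ≤ l → b1 0 l = 0)
    (h2k0 : ∀ k : ℕ, 1 ≤ k → b2 k 0 = 0)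
    (hrec1 : ∀ k l : ℕ,
      b1 (k + 1) l =
        ((Real.Gamma (k * α₁ + l * α₂ + 1) /
          Real.Gamma ((k + 1) * α₁ + l * α₂ + 1) : ℝ) : ℂ) *
          (a₁₁ * b1 k l + a₁₂ * b2 k l))
    (hrec2 : ∀ k l : ℕ,
      b2 k (l + 1) =
        ((Real.Gamma (k * α₁ + l * α₂ + 1) /
          Real.Gamma (k * α₁ + (l + 1) * α₂ + 1) : ℝ) : ℂ) *
          (a₂₁ * b1 k l + a₂₂ * b2 k l))
    (β1 β2 : ℕ → ℝ)
    (hβ1 : ∀ k, β1 k = ∑ μ ∈ Finset.range (k + 1), ‖b1 μ (k - μ)‖)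
    (hβ2 : ∀ k, β2 k = ∑ μ ∈ Finset.range (k + 1), ‖b2 μ (k - μ)‖)
    (αstar abar : ℝ)
    (hαstar : αstar = min α₁ α₂)
    (habar : abar = max (max (‖a₁₁‖) (‖a₁₂‖))
                        (max (‖a₂₁‖) (‖a₂₂‖))) :
    ∃ N : ℕ, ∀ k : ℕ,
      β1 (N + k) + β2 (N + k) ≤
        (2 * abar) ^ k * Real.Gamma (N * αstar + 1) /
          Real.Gamma ((N + k) * αstar + 1) * (β1 N + β2 N) := by
  have hα : 0 < αstar := hαstar ▸ lt_min hα₁.1 hα₂.1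
  obtain ⟨ha₁₁, ha₁₂, ha₂₁, ha₂₂⟩ :
      ‖a₁₁‖ ≤ abar ∧ ‖a₁₂‖ ≤ abar ∧ ‖a₂₁‖ ≤ abar ∧ ‖a₂₂‖ ≤ abar := by
    simp [habar]
  obtain ⟨N, hN⟩ : ∃ N : ℕ, 1 ≤ N * αstar := by
    obtain ⟨N, hN⟩ := exists_nat_ge (1 / αstar)
    exact ⟨N, (div_le_iff₀ hα).1 hN⟩
  have hβ : ∀ n, β1 n + β2 n = diagNormSum b1 n + diagNormSum b2 n := by
    simp [hβ1, hβ2, diagNormSum_eq_sum_range]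
  refine ⟨N, fun k => ?_⟩
  have key := le_pow_mul_div_of_forall_succ_le (u := fun n => β1 n + β2 n)
    (g := fun n : ℕ => Gamma (n * αstar + 1)) (C := 2 * abar) (N := N)
    (mul_nonneg zero_le_two ((norm_nonneg _).trans ha₁₁))
    (fun n => Gamma_pos_of_pos (by positivity)) (fun n hn => ?_) k
  · simpa using key
  · simp only [hβ]
    exact diagNormSum_add_succ_le (hαstar ▸ min_le_left _ _) (hαstar ▸ min_le_right _ _) hα.le
      ha₁₁ ha₁₂ ha₂₁ ha₂₂ hrec1 hrec2 (h10l _ n.succ_pos) (h2k0 _ n.succ_pos)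
      (hN.trans (by gcongr))

theorem stmt_4
    (α₁ α₂ : ℝ) (hα₁ : α₁ ∈ Set.Ioc (0 : ℝ) 1) (hα₂ : α₂ ∈ Set.Ioc (0 : ℝ) 1)
    (a₁₁ a₁₂ a₂₁ a₂₂ x₁ x₂ : ℂ)
    (b1 b2 : ℕ → ℕ → ℂ)
    (h100 : b1 0 0 = x₁) (h200 : b2 0 0 = x₂)
    (h10l : ∀ l : ℕ, 1 ≤ l → b1 0 l = 0)
    (h2k0 : ∀ k : ℕ, 1 ≤ k → b2 k 0 = 0)
    (hrec1 : ∀ k l : ℕ,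
      b1 (k + 1) l =
        ((Real.Gamma (k * α₁ + l * α₂ + 1) /
          Real.Gamma ((k + 1) * α₁ + l * α₂ + 1) : ℝ) : ℂ) *
          (a₁₁ * b1 k l + a₁₂ * b2 k l))
    (hrec2 : ∀ k l : ℕ,
      b2 k (l + 1) =
        ((Real.Gamma (k * α₁ + l * α₂ + 1) /
          Real.Gamma (k * α₁ + (l + 1) * α₂ + 1) : ℝ) : ℂ) *
          (a₂₁ * b1 k l + a₂₂ * b2 k l))
    (β1 β2 : ℕ → ℝ)
    (hβ1 : ∀ k, β1 k = ∑ μ ∈ Finset.range (k + 1), ‖b1 μ (k - μ)‖)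
    (hβ2 : ∀ k, β2 k = ∑ μ ∈ Finset.range (k + 1), ‖b2 μ (k - μ)‖)
    (αstar abar : ℝ)
    (hαstar : αstar = min α₁ α₂)
    (habar : abar = max (max (‖a₁₁‖) (‖a₁₂‖))
                        (max (‖a₂₁‖) (‖a₂₂‖))) :
    ∃ N : ℕ, ∀ k : ℕ,
      β1 (N + k) + β2 (N + k) ≤
        (2 * abar) ^ k * Real.Gamma (N * αstar + 1) /
          Real.Gamma ((N + k) * αstar + 1) * (β1 N + β2 N) :=
  stmt_4_general α₁ α₂ hα₁ hα₂ a₁₁ a₁₂ a₂₁ a₂₂ b1 b2 h10l h2k0 hrec1 hrec2 β1 β2 hβ1 hβ2 αstar abar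
    hαstar habar
end
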